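/- Let R be a discrete valuation ring with uniformizer t, valuation val and residue field 𝔽 = R/tR. Let M and N be free R-modules of the same finite rank, and B : M × N → R an R-bilinear pairing whose Gram determinant (with respect to any bases) is nonzero. For i ≥ 0 set M^i := {m ∈ M | B(m, N) ⊆ t^i R}, and let M̄^i be the image of M^i in M ⊗_R 𝔽. Then Σ_{i≥1} dim_𝔽 M̄^i = val(det B). -/

import Mathlib

/-!
Over a PID the pairing has a Smith normal form: bases `e` of `M` and `f` of `N` with
`B (e k) (f l) = δ_{kl} a_k`. Since Gram determinants for different bases differ by units,
`∏ a_k` is associated to `t ^ v`, so `a_k ~ t ^ w_k` with `∑ w_k = v`. In these coordinates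
`m ∈ M^i` iff `t ^ i ∣ m_k t ^ w_k` for all `k`, so `M̄^i` is spanned by the reductions of the
`e_k` with `i ≤ w_k` and has dimension `#{k | i ≤ w_k}`; summing over `i ≥ 1` gives `∑ w_k = v`.
-/

open Module Submodule Finset

namespace Module.Basis

variable {ι R M : Type*} [CommRing R] [AddCommGroup M] [Module R M]

theorem forall_apply_mem_iff (f : Basis ι R M) (φ : M →ₗ[R] R) (J : Ideal R) :
    (∀ y, φ y ∈ J) ↔ ∀ k, φ (f k) ∈ J := by
  refine ⟨fun h k => h _, fun h y => ?_⟩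
  rw [← f.linearCombination_repr y, Finsupp.linearCombination_apply, map_finsuppSum]
  exact sum_mem fun k _ => by simpa using J.mul_mem_left _ (h k)

noncomputable def quotIdealSMulTop (I : Ideal R) (e : Basis ι R M) :
    Basis ι (R ⧸ I) (M ⧸ I • (⊤ : Submodule R M)) :=
  (Algebra.TensorProduct.basis (R ⧸ I) e).map
    ((TensorProduct.quotTensorEquivQuotSMul M I).extendScalarsOfSurjective
      Ideal.Quotient.mk_surjective)

@[simp]
theorem quotIdealSMulTop_apply (I : Ideal R) (e : Basis ι R M) (k : ι) :
    e.quotIdealSMulTop I k = Submodule.Quotient.mk (e k) := by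
  simp [quotIdealSMulTop]

@[simp]
theorem quotIdealSMulTop_repr_mk (I : Ideal R) (e : Basis ι R M) (m : M) (k : ι) :
    (e.quotIdealSMulTop I).repr (Submodule.Quotient.mk m) k =
      Ideal.Quotient.mk I (e.repr m k) := by
  simp [quotIdealSMulTop, Algebra.TensorProduct.basis_repr_tmul]

end Module.Basis

namespace LinearMap

variable {ι R M N : Type*} [Fintype ι] [DecidableEq ι] [CommRing R]
  [AddCommGroup M] [Module R M] [AddCommGroup N] [Module R N]

theorem associated_det_toMatrix₂ (b e : Basis ι R M) (c f : Basis ι R N)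
    (B : M →ₗ[R] N →ₗ[R] R) :
    Associated (toMatrix₂ b c B).det (toMatrix₂ e f B).det := by
  rw [← toMatrix₂_mul_basis_toMatrix b c e f, Matrix.det_mul, Matrix.det_mul,
    Matrix.det_transpose, ← Basis.det_apply, ← Basis.det_apply]
  exact (associated_unit_mul_right _ _ (b.isUnit_det e)).trans
    (associated_mul_unit_right _ _ (c.isUnit_det f))

theorem apply_eq_repr_mul_of_toMatrix₂_eq_diagonal {B : M →ₗ[R] N →ₗ[R] R}
    {e : Basis ι R M} {f : Basis ι R N} {a : ι → R} (h : toMatrix₂ e f B = Matrix.diagonal a)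
    (m : M) (k : ι) :
    B m (f k) = e.repr m k * a k := by
  have hB i : B (e i) (f k) = if i = k then a k else 0 := by
    rw [← toMatrix₂_apply, h, Matrix.diagonal_apply]
    split_ifs with hik <;> simp [hik]
  conv_lhs => rw [← e.sum_repr m]
  simp only [map_sum, map_smul, sum_apply, smul_apply, hB, smul_eq_mul, mul_ite, mul_zero,
    sum_ite_eq', mem_univ, if_true]

/-- Take a Smith basis of `Dual R N` adapted to the image of `M`, and the basis of `N` dual to it. -/
theorem exists_toMatrix₂_eq_diagonal [IsDomain R] [IsPrincipalIdealRing R]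
    (b : Basis ι R M) (c : Basis ι R N) (B : M →ₗ[R] N →ₗ[R] R) (hB : B.SeparatingLeft) :
    ∃ (e : Basis ι R M) (f : Basis ι R N) (a : ι → R), toMatrix₂ e f B = Matrix.diagonal a := by
  have : Module.Finite R N := .of_basis c
  have : Module.Free R N := .of_basis c
  have hinj : Function.Injective B := ker_eq_bot.mp (separatingLeft_iff_ker_eq_bot.mp hB)
  let φ : M ≃ₗ[R] range B := LinearEquiv.ofInjective B hinj
  have hrank : finrank R (range B) = finrank R (Dual R N) := by
    rw [← φ.finrank_eq, finrank_eq_card_basis b, finrank_eq_card_basis c.dualBasis]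
  obtain ⟨g, a, g', hg'⟩ := Submodule.exists_smith_normal_form_of_rank_eq c.dualBasis hrank
  refine ⟨g'.map φ.symm, g.dualBasis.map (evalEquiv R N).symm, a, ?_⟩
  ext i j
  have hφ : B (φ.symm (g' i)) = a i • g i := by
    rw [← hg', ← LinearEquiv.ofInjective_apply B (h := hinj), LinearEquiv.apply_symm_apply]
  simp [toMatrix₂_apply, hφ, apply_evalEquiv_symm_apply, Finsupp.single_apply,
    Matrix.diagonal_apply]

end LinearMap

section PrimePowers

variable {α : Type*} [CommMonoidWithZero α] [IsCancelMulZero α] {p : α}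

theorem exists_associated_pow_of_associated_prod {ι : Type*} [Fintype ι] (hp : Prime p)
    {a : ι → α} {v : ℕ} (h : Associated (p ^ v) (∏ i, a i)) :
    ∃ w : ι → ℕ, (∀ i, Associated (a i) (p ^ w i)) ∧ ∑ i, w i = v := by
  have hdvd i : a i ∣ p ^ v := (dvd_prod_of_mem a (mem_univ i)).trans h.symm.dvd
  choose w hw using fun i => ((dvd_prime_pow hp v).mp (hdvd i)).imp fun _ => And.right
  refine ⟨w, hw, ?_⟩
  have hpow : Associated (p ^ v) (p ^ ∑ i, w i) := by
    rw [← prod_pow_eq_pow_sum]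
    exact h.trans (Associated.prod _ _ _ fun i _ => hw i)
  exact le_antisymm ((pow_dvd_pow_iff hp.ne_zero hp.not_isUnit).mp hpow.symm.dvd)
    ((pow_dvd_pow_iff hp.ne_zero hp.not_isUnit).mp hpow.dvd)

theorem dvd_of_pow_dvd_mul_pow (hp : p ≠ 0) {x : α} {j w : ℕ} (hwj : w < j)
    (h : p ^ j ∣ x * p ^ w) : p ∣ x := by
  rw [← mul_dvd_mul_iff_right (pow_ne_zero w hp), ← pow_succ']
  exact (pow_dvd_pow p hwj).trans h

end PrimePowers

section DiagonalLattice

variable {ι R M : Type*} [CommRing R] [IsDomain R] [AddCommGroup M] [Module R M]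
  {t : R} (e : Basis ι R M) (w : ι → ℕ) (j : ℕ)

theorem span_image_mkQ_setOf_pow_dvd (ht : t ≠ 0) :
    span (R ⧸ Ideal.span {t})
        (mkQ (Ideal.span {t} • ⊤) '' {m : M | ∀ k, t ^ j ∣ e.repr m k * t ^ w k}) =
      span (R ⧸ Ideal.span {t}) (e.quotIdealSMulTop (Ideal.span {t}) '' {k | j ≤ w k}) := by
  apply le_antisymm
  · rw [span_le]
    rintro _ ⟨m, hm, rfl⟩
    rw [SetLike.mem_coe, Basis.mem_span_image]
    intro k hk
    by_contra hjk
    apply Finsupp.mem_support_iff.mp hk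
    rw [mkQ_apply, Basis.quotIdealSMulTop_repr_mk, Ideal.Quotient.eq_zero_iff_mem,
      Ideal.mem_span_singleton]
    exact dvd_of_pow_dvd_mul_pow ht (not_le.mp hjk) (hm k)
  · rw [span_le]
    rintro _ ⟨k, hk, rfl⟩
    refine subset_span ⟨e k, fun k' => ?_, by simp⟩
    classical
    rw [e.repr_self, Finsupp.single_apply]
    split_ifs with hkk
    · subst hkk
      simpa using pow_dvd_pow t hk
    · simp

theorem finrank_span_image_mkQ_setOf_pow_dvd [Fintype ι] (ht : t ≠ 0) (ht' : ¬IsUnit t) :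
    finrank (R ⧸ Ideal.span {t}) (span (R ⧸ Ideal.span {t})
        (mkQ (Ideal.span {t} • (⊤ : Submodule R M)) ''
          {m : M | ∀ k, t ^ j ∣ e.repr m k * t ^ w k})) =
      #{k | j ≤ w k} := by
  classical
  have : Nontrivial (R ⧸ Ideal.span {t}) := by
    rwa [Ideal.Quotient.nontrivial_iff, ne_eq, Ideal.span_singleton_eq_top]
  rw [span_image_mkQ_setOf_pow_dvd e w j ht, Set.image_eq_range]
  exact (finrank_span_eq_card ((e.quotIdealSMulTop _).linearIndependent.comp _
    Subtype.val_injective)).trans (by simp [Fintype.card_subtype])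

end DiagonalLattice

theorem finsum_card_filter_lt {ι : Type*} [Fintype ι] (w : ι → ℕ) :
    ∑ᶠ i : ℕ, #{k | i < w k} = ∑ k, w k := by
  classical
  have hsupp k : (Function.support fun i : ℕ => if i < w k then 1 else 0) ⊆ range (w k) :=
    fun i hi => mem_range.mpr (by by_contra h; exact hi (if_neg h))
  calc ∑ᶠ i : ℕ, #{k | i < w k} = ∑ᶠ i : ℕ, ∑ k, if i < w k then 1 else 0 := by
        simp only [card_filter]
    _ = ∑ k, ∑ᶠ i : ℕ, if i < w k then 1 else 0 :=
        finsum_sum_comm _ _ fun k _ => (range (w k)).finite_toSet.subset (hsupp k)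
    _ = ∑ k, w k := sum_congr rfl fun k _ => by
        rw [finsum_eq_sum_of_support_subset _ (hsupp k), sum_boole,
          filter_true_of_mem fun i => mem_range.mp]
        simp

/-- The abstract Jantzen filtration lemma.  `R` is a discrete valuation ring with
uniformizer `t` and residue field `𝔽 = R/tR`; `M`, `N` are free `R`-modules of the same
finite rank (with bases `b`, `c`); `B` is an `R`-bilinear pairing whose Gram determinant
`det (B (b i) (c j))` is nonzero, with valuation `v` (i.e. it is associated to `t^v`).
Setting `M^i = {m | B(m, N) ⊆ t^i R}` and letting `M̄^i` be the image of `M^i` in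
`M ⊗_R 𝔽 = M/tM`, one has `Σ_{i≥1} dim_𝔽 M̄^i = v = val (det B)`. -/
theorem jantzen_sum_of_dims_eq_valuation_of_det
    {R M N : Type*} [CommRing R] [IsDomain R] [IsDiscreteValuationRing R]
    [AddCommGroup M] [Module R M] [AddCommGroup N] [Module R N]
    (t : R) (ht : Irreducible t)
    (n : ℕ) (b : Module.Basis (Fin n) R M) (c : Module.Basis (Fin n) R N)
    (B : M →ₗ[R] N →ₗ[R] R)
    (v : ℕ)
    (hv : Associated (t ^ v) (Matrix.det (Matrix.of fun i j => B (b i) (c j)))) :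
    ∑ᶠ i : ℕ,
      Module.finrank (R ⧸ Ideal.span {t})
        (Submodule.span (R ⧸ Ideal.span {t})
          ((Submodule.mkQ ((Ideal.span {t}) • (⊤ : Submodule R M))) ''
            {m : M | ∀ y : N, B m y ∈ Ideal.span {t ^ (i + 1)}})) = v := by
  have htp : Prime t := ht.prime
  have hgram : Matrix.of (fun i j => B (b i) (c j)) = LinearMap.toMatrix₂ b c B := by
    ext; simp [LinearMap.toMatrix₂_apply]
  rw [hgram] at hv
  have hB : B.SeparatingLeft := (LinearMap.separatingLeft_toMatrix₂_iff b c).mp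
    (Matrix.separatingLeft_iff_det_ne_zero.mpr (hv.ne_zero_iff.mp (pow_ne_zero v htp.ne_zero)))
  obtain ⟨e, f, a, hdiag⟩ := LinearMap.exists_toMatrix₂_eq_diagonal b c B hB
  have hprod : Associated (t ^ v) (∏ k, a k) := by
    simpa [hdiag] using hv.trans (LinearMap.associated_det_toMatrix₂ b e c f B)
  obtain ⟨w, hw, rfl⟩ := exists_associated_pow_of_associated_prod htp hprod
  have hjantzen (j : ℕ) : {m : M | ∀ y, B m y ∈ Ideal.span {t ^ j}} =
      {m | ∀ k, t ^ j ∣ e.repr m k * t ^ w k} := by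
    ext m
    change (∀ y, B m y ∈ _) ↔ _
    simp_rw [f.forall_apply_mem_iff (B m),
      LinearMap.apply_eq_repr_mul_of_toMatrix₂_eq_diagonal hdiag, Ideal.mem_span_singleton]
    exact forall_congr' fun k => ((hw k).mul_left _).dvd_iff_dvd_right
  rw [finsum_congr fun i => by
    rw [hjantzen, finrank_span_image_mkQ_setOf_pow_dvd e w _ htp.ne_zero htp.not_isUnit]]
  exact finsum_card_filter_lt w
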